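/- arXiv:2312.12354 — 2 statements merged into one kernel-verified Lean document; each statement's English description precedes it below -/
import Mathlib

section
/- Let G be a graph whose girth is strictly greater than d, where d ≥ 2, and let v be a vertex of G. Then v is a d-local cutvertex of G if and only if v has degree at least 2. -/
open SimpleGraph

variable {V : Type*}

/-- The ball of diameter `d` around `v`: the subgraph of vertices and edges
lying on closed walks of length at most `d` containing `v`. -/
def ball (G : SimpleGraph V) (v : V) (d : ℕ) : G.Subgraph where
  verts := {u | ∃ W : G.Walk v v, W.length ≤ d ∧ u ∈ W.support}
  Adj x y := ∃ W : G.Walk v v, W.length ≤ d ∧ s(x, y) ∈ W.edges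
  adj_sub := fun ⟨W, _, he⟩ => W.adj_of_mem_edges he
  edge_vert := fun ⟨W, hl, he⟩ => ⟨W, hl, W.fst_mem_support_of_mem_edges he⟩
  symm := ⟨fun x y ⟨W, hl, he⟩ => ⟨W, hl, by rwa [Sym2.eq_swap]⟩⟩

/-- v is a d-local cutvertex if the ball D_d(v) minus v is disconnected. -/
def IsLocalCutvertex (G : SimpleGraph V) (d : ℕ) (v : V) : Prop :=
  ¬ (((_root_.ball G v d).deleteVerts {v}).coe).Preconnected

/-!
Below the girth, geodesics are unique: two distinct paths with common ends contain a cycle of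
length at most their total length. Hence every vertex `x ≠ v` of `D_d(v)` has a unique
*first step*, the neighbour of `v` on the geodesics from `v` to `x`. An edge `xy` of `D_d(v)`
lies on a closed walk of length at most `d` through `v`, so `d(v,x) + d(v,y) + 1 ≤ d`; this
excludes edges inside one distance level, and makes the first step constant along the edges of
`D_d(v) − v`. Two distinct neighbours of `v` are their own first steps, so they lie in different
components. Conversely, following a closed walk from any vertex of `D_d(v) − v` back to `v`
joins it inside `D_d(v) − v` to a neighbour of `v`, so a vertex with a single neighbour is not a
local cutvertex.
-/

namespace SimpleGraph

variable {G : SimpleGraph V}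

lemma Walk.IsPath.eq_of_length_add_length_lt_egirth {a b : V} {p q : G.Walk a b}
    (hp : p.IsPath) (hq : q.IsPath) (hlt : ((p.length + q.length : ℕ) : ℕ∞) < G.egirth) :
    p = q := by
  by_contra hne
  obtain ⟨_, _, p', q', hp', hq', hc⟩ := hp.exists_isCycle_of_ne hq hne
  have hlen : (p'.append q'.reverse).length ≤ p.length + q.length := by
    simpa using add_le_add (Walk.length_le_of_isSubwalk hp') (Walk.length_le_of_isSubwalk hq')
  exact (egirth_le_length hc).not_gt (lt_of_le_of_lt (by exact_mod_cast hlen) hlt)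

lemma Walk.dist_add_length_add_dist_le_of_isSubwalk {a c x y : V} {W : G.Walk a c}
    {p : G.Walk x y} (h : p.IsSubwalk W) : G.dist a x + p.length + G.dist y c ≤ W.length := by
  obtain ⟨ru, rv, rfl⟩ := h
  have := dist_le ru
  have := dist_le rv
  simp only [Walk.length_append]
  omega

def IsFirstStep (G : SimpleGraph V) (v z x : V) : Prop :=
  G.Adj v z ∧ G.dist v x = G.dist z x + 1

lemma IsFirstStep.reachable {v z x : V} (h : G.IsFirstStep v z x) : G.Reachable v x :=
  Reachable.of_dist_ne_zero (by rw [h.2]; omega)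

lemma exists_isFirstStep {v x : V} (hr : G.Reachable v x) (hne : v ≠ x) :
    ∃ z, G.IsFirstStep v z x := by
  obtain ⟨p, hp⟩ := hr.exists_walk_length_eq_dist
  cases p with
  | nil => exact absurd rfl hne
  | cons h q =>
    refine ⟨_, h, le_antisymm ?_ ?_⟩
    · have := h.reachable.dist_triangle_left x
      rwa [dist_eq_one_iff_adj.mpr h, add_comm] at this
    · have := dist_le q
      rw [Walk.length_cons] at hp
      omega

lemma IsFirstStep.of_adj_of_dist_eq_add_one {v z x y : V} (hz : G.IsFirstStep v z x)
    (hxy : G.Adj x y) (hy : G.dist v y = G.dist v x + 1) : G.IsFirstStep v z y := by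
  have hvy := hz.1.reachable.dist_triangle_left y
  have hzy := hxy.reachable.dist_triangle_right z
  rw [dist_eq_one_iff_adj.mpr hz.1] at hvy
  rw [dist_eq_one_iff_adj.mpr hxy] at hzy
  exact ⟨hz.1, by have := hz.2; omega⟩

/-- The geodesics through `z₁` and `z₂` are paths of total length `2 * dist v x`, hence equal. -/
lemma IsFirstStep.unique {v x z₁ z₂ : V} (hg : ((2 * G.dist v x : ℕ) : ℕ∞) < G.egirth)
    (h₁ : G.IsFirstStep v z₁ x) (h₂ : G.IsFirstStep v z₂ x) : z₁ = z₂ := by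
  obtain ⟨p₁, hp₁⟩ := (h₁.1.reachable.symm.trans h₁.reachable).exists_walk_length_eq_dist
  obtain ⟨p₂, hp₂⟩ := (h₂.1.reachable.symm.trans h₂.reachable).exists_walk_length_eq_dist
  have hc₁ : (Walk.cons h₁.1 p₁).length = G.dist v x := by rw [Walk.length_cons, hp₁, h₁.2]
  have hc₂ : (Walk.cons h₂.1 p₂).length = G.dist v x := by rw [Walk.length_cons, hp₂, h₂.2]
  have heq := (Walk.isPath_of_length_eq_dist _ hc₁).eq_of_length_add_length_lt_egirth
    (Walk.isPath_of_length_eq_dist _ hc₂) (by rwa [hc₁, hc₂, ← two_mul])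
  simpa using congrArg Walk.snd heq

lemma dist_ne_dist_of_adj {v x y : V} (hr : G.Reachable v x) (hxy : G.Adj x y)
    (hg : ((2 * G.dist v x + 1 : ℕ) : ℕ∞) < G.egirth) : G.dist v x ≠ G.dist v y := by
  intro heq
  obtain ⟨p, hp⟩ := hr.exists_walk_length_eq_dist
  obtain ⟨q, hq⟩ := (hr.trans hxy.reachable).exists_walk_length_eq_dist
  have hy : y ∉ p.support := fun hy => by
    have := Walk.dist_add_length_add_dist_le_of_isSubwalk
      ((Walk.isSubwalk_nil_iff_mem_support p).mpr hy)
    rw [dist_eq_one_iff_adj.mpr hxy.symm, Walk.length_nil] at this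
    omega
  have heq' := ((p.isPath_of_length_eq_dist hp).concat hy hxy).eq_of_length_add_length_lt_egirth
    (q.isPath_of_length_eq_dist hq)
    (lt_of_le_of_lt (Nat.cast_le.mpr (by rw [Walk.length_concat, hp, hq, ← heq]; omega)) hg)
  have := congrArg Walk.length heq'
  rw [Walk.length_concat] at this
  omega

lemma IsFirstStep.of_adj {v x y z : V} (hz : G.IsFirstStep v z x) (hxy : G.Adj x y) (hyv : y ≠ v)
    (hg : ((G.dist v x + G.dist v y + 1 : ℕ) : ℕ∞) < G.egirth) : G.IsFirstStep v z y := by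
  have hx := hz.2
  rcases hxy.diff_dist_adj (u := v) with h | h | h
  · exact absurd h.symm (dist_ne_dist_of_adj hz.reachable hxy (by rwa [h, ← two_mul] at hg))
  · exact hz.of_adj_of_dist_eq_add_one hxy h
  · obtain ⟨z', hz'⟩ := exists_isFirstStep (hz.reachable.trans hxy.reachable) hyv.symm
    have hzx' := hz'.of_adj_of_dist_eq_add_one hxy.symm (by omega)
    rwa [hz.unique (lt_of_le_of_lt (Nat.cast_le.mpr (by omega)) hg) hzx']

lemma Subgraph.exists_adj_reachable_deleteVerts (H : G.Subgraph) {x v : V} (r : G.Walk x v)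
    (hr : ∀ e ∈ r.edges, e ∈ H.edgeSet) (hx : x ∈ (H.deleteVerts {v}).verts) :
    ∃ z, H.Adj z v ∧ ∃ hz : z ∈ (H.deleteVerts {v}).verts,
      (H.deleteVerts {v}).coe.Reachable ⟨x, hx⟩ ⟨z, hz⟩ := by
  induction r with
  | nil => exact absurd rfl hx.2
  | @cons x c v h q ih =>
    have hxc : H.Adj x c := hr s(x, c) (by simp)
    by_cases hcv : c = v
    · subst hcv
      exact ⟨x, hxc, hx, .rfl⟩
    have hc : c ∈ (H.deleteVerts {v}).verts := ⟨hxc.snd_mem, hcv⟩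
    obtain ⟨z, hzv, hz, hcz⟩ := ih (fun e he => hr e (by simp [he])) hc
    have hadj : (H.deleteVerts {v}).coe.Adj ⟨x, hx⟩ ⟨c, hc⟩ :=
      Subgraph.deleteVerts_adj.mpr ⟨hx.1, hx.2, hc.1, hcv, hxc⟩
    exact ⟨z, hzv, hz, hadj.reachable.trans hcz⟩

end SimpleGraph

section LocalCutvertex

variable {G : SimpleGraph V} {d : ℕ} {v : V}

lemma dist_add_dist_add_one_le_of_ball_adj {x y : V} (h : (_root_.ball G v d).Adj x y) :
    G.dist v x + G.dist v y + 1 ≤ d := by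
  obtain ⟨W, hl, he⟩ := h
  rcases (Walk.isSubwalk_toWalk_iff_mem_edges (W.adj_of_mem_edges he)).mpr he with h | h <;>
  · have := Walk.dist_add_length_add_dist_le_of_isSubwalk h
    rw [dist_comm (u := _) (v := v)] at this
    simp only [Adj.toWalk, Walk.length_cons, Walk.length_nil] at this
    omega

lemma adj_mem_ball_deleteVerts (hd : 2 ≤ d) {u : V} (hu : G.Adj v u) :
    u ∈ ((_root_.ball G v d).deleteVerts {v}).verts :=
  ⟨⟨.cons hu (.cons hu.symm .nil), by simpa using hd, by simp⟩, by simpa using hu.ne'⟩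

lemma isFirstStep_of_reachable_ball_deleteVerts (hg : (d : ℕ∞) < G.egirth) {z : V}
    {x y : ((_root_.ball G v d).deleteVerts {v}).verts}
    (hxy : ((_root_.ball G v d).deleteVerts {v}).coe.Reachable x y)
    (hz : G.IsFirstStep v z x) : G.IsFirstStep v z y := by
  obtain ⟨p⟩ := hxy
  induction p with
  | nil => exact hz
  | cons h _ ih =>
    obtain ⟨-, -, -, hbv, hab⟩ := Subgraph.deleteVerts_adj.mp h
    exact ih (hz.of_adj hab.adj_sub hbv
      (lt_of_le_of_lt (by exact_mod_cast dist_add_dist_add_one_le_of_ball_adj hab) hg))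

lemma ball_deleteVerts_preconnected (hv : ∀ u w, G.Adj v u → G.Adj v w → u = w) :
    ((_root_.ball G v d).deleteVerts {v}).coe.Preconnected := by
  classical
  have hnbr : ∀ x : ((_root_.ball G v d).deleteVerts {v}).verts, ∃ z, G.Adj v z ∧
      ∃ hz, ((_root_.ball G v d).deleteVerts {v}).coe.Reachable x ⟨z, hz⟩ := by
    rintro ⟨x, hx⟩
    obtain ⟨W, hl, hxW⟩ := hx.1
    have hW : ∀ e ∈ (W.dropUntil x hxW).edges, e ∈ (_root_.ball G v d).edgeSet := by
      intro e he
      induction e using Sym2.ind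
      exact ⟨W, hl, W.edges_dropUntil_subset_edges hxW he⟩
    obtain ⟨z, hzv, hz, hxz⟩ :=
      (_root_.ball G v d).exists_adj_reachable_deleteVerts (W.dropUntil x hxW) hW hx
    exact ⟨z, hzv.adj_sub.symm, hz, hxz⟩
  intro x y
  obtain ⟨zx, hzx, hx, hxz⟩ := hnbr x
  obtain ⟨zy, hzy, hy, hyz⟩ := hnbr y
  obtain rfl := hv _ _ hzx hzy
  exact hxz.trans hyz.symm

lemma not_ball_deleteVerts_preconnected (hd : 2 ≤ d) (hg : (d : ℕ∞) < G.egirth) {u w : V}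
    (huw : u ≠ w) (hu : G.Adj v u) (hw : G.Adj v w) :
    ¬ ((_root_.ball G v d).deleteVerts {v}).coe.Preconnected := by
  intro hpre
  have hfs : G.IsFirstStep v u w := isFirstStep_of_reachable_ball_deleteVerts hg
    (hpre ⟨u, adj_mem_ball_deleteVerts hd hu⟩ ⟨w, adj_mem_ball_deleteVerts hd hw⟩)
    ⟨hu, by simp [hu]⟩
  have h2 : ((2 * G.dist v w : ℕ) : ℕ∞) < G.egirth :=
    lt_of_le_of_lt (Nat.cast_le.mpr (by rw [dist_eq_one_iff_adj.mpr hw]; omega)) hg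
  exact huw (hfs.unique h2 ⟨hw, by simp [hw]⟩)

end LocalCutvertex

/-- If G has girth greater than d ≥ 2, then v is a d-local cutvertex
iff v has at least two (distinct) neighbours, i.e. degree at least 2. -/
theorem stmt6 (G : SimpleGraph V) (d : ℕ) (hd : 2 ≤ d) (hg : (d : ℕ∞) < G.girth) (v : V) :
    IsLocalCutvertex G d v ↔ ∃ u w : V, u ≠ w ∧ G.Adj v u ∧ G.Adj v w := by
  have hg' : (d : ℕ∞) < G.egirth := hg.trans_le (ENat.natCast_toNat_le_self _)
  constructor
  · intro hcut
    by_contra! h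
    exact hcut (ball_deleteVerts_preconnected fun u w hu hw =>
      by_contra fun hne => h u w hne hu hw)
  · rintro ⟨u, w, huw, hu, hw⟩
    exact not_ball_deleteVerts_preconnected hd hg' huw hu hw
end

section
/- Let G be a connected graph on n ≥ 3 vertices, let v_0 ≠ v_1 be vertices, and let d ≥ 2n. Then the connectivity graph C_d(v_0, v_1, G) is disconnected if and only if G − v_0 − v_1 is disconnected. Consequently, for such large d, {v_0, v_1} is a d-local 2-separator precisely when it is a (global) 2-separator. -/
open SimpleGraph

variable {V : Type*}

/-- The set N({v₀,v₁}) of neighbours of v₀ or v₁ outside {v₀,v₁}. -/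
def nbhd (G : SimpleGraph V) (v0 v1 : V) : Set V :=
  {x | x ≠ v0 ∧ x ≠ v1 ∧ (G.Adj v0 x ∨ G.Adj v1 x)}

/-- The connectivity graph C_d(v₀,v₁,G): vertices are N({v₀,v₁}), and x,y are
adjacent if there is an x–y path in D_d(vᵢ) − v₀ − v₁ for some i ∈ {0,1}. -/
def connGraph (G : SimpleGraph V) (d : ℕ) (v0 v1 : V) : SimpleGraph V where
  Adj x y := x ≠ y ∧ x ∈ nbhd G v0 v1 ∧ y ∈ nbhd G v0 v1 ∧
    (((_root_.ball G v0 d).deleteVerts {v0, v1}).spanningCoe.Reachable x y ∨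
     ((_root_.ball G v1 d).deleteVerts {v0, v1}).spanningCoe.Reachable x y)
  symm := ⟨fun x y ⟨hxy, hx, hy, hr⟩ =>
    ⟨hxy.symm, hy, hx, hr.imp SimpleGraph.Reachable.symm SimpleGraph.Reachable.symm⟩⟩
  loopless := ⟨fun x h => h.1 rfl⟩

/-!
For `d ≥ 2n` every closed walk needed to reach a vertex or an edge of the connected graph `G`
from `vᵢ` and back has length at most `d`, so both balls are all of `G`. Hence two vertices of
`N = N({v₀, v₁})` are adjacent in `C_d` exactly when they lie in the same component of
`G - v₀ - v₁`. Since every vertex of `G - v₀ - v₁` reaches `N` there (follow a walk in `G`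
towards `v₀` up to its first vertex in `{v₀, v₁}`), `C_d` is connected iff `G - v₀ - v₁` is.
-/

namespace SimpleGraph

variable {α β : Type*} {G : SimpleGraph V}

lemma Reachable.lift {C : SimpleGraph α} {H : SimpleGraph β} {a b : α} (h : C.Reachable a b)
    (f : α → β) (hf : ∀ a b, C.Adj a b → H.Reachable (f a) (f b)) :
    H.Reachable (f a) (f b) := by
  rw [reachable_iff_reflTransGen] at h ⊢
  exact Relation.ReflTransGen.lift' f
    (fun a b hab => (reachable_iff_reflTransGen _ _).1 (hf a b hab)) _ _ h

lemma connected_iff_of_adj_iff_reachable {C : SimpleGraph α} {H : SimpleGraph β} (f : α → β)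
    (hadj : ∀ a b, a ≠ b → (C.Adj a b ↔ H.Reachable (f a) (f b)))
    (hcover : ∀ y, ∃ a, H.Reachable y (f a)) :
    C.Connected ↔ H.Connected := by
  rw [connected_iff, connected_iff]
  constructor
  · rintro ⟨hC, ⟨a⟩⟩
    refine ⟨fun y y' => ?_, ⟨f a⟩⟩
    obtain ⟨a, hya⟩ := hcover y
    obtain ⟨a', hya'⟩ := hcover y'
    have haa' := (hC a a').lift f fun a b hab => (hadj a b hab.ne).1 hab
    exact hya.trans (haa'.trans hya'.symm)
  · rintro ⟨hH, ⟨y⟩⟩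
    refine ⟨fun a b => ?_, ⟨(hcover y).choose⟩⟩
    rcases eq_or_ne a b with rfl | hab
    · rfl
    · exact ((hadj a b hab).2 (hH _ _)).reachable

lemma reachable_spanningCoe_deleteVerts_top_iff {s : Set V} {x y : V} (hx : x ∈ sᶜ) (hy : y ∈ sᶜ) :
    ((⊤ : G.Subgraph).deleteVerts s).spanningCoe.Reachable x y ↔
      (G.induce sᶜ).Reachable ⟨x, hx⟩ ⟨y, hy⟩ := by
  constructor
  · rintro ⟨p⟩
    induction p with
    | nil => rfl
    | cons h p ih =>
      obtain ⟨-, -, -, hb, hab⟩ := Subgraph.deleteVerts_adj.1 h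
      exact (Adj.reachable (induce_adj.2 hab)).trans (ih hb hy)
  · exact fun h => h.lift Subtype.val fun a b hab =>
      Adj.reachable <| Subgraph.deleteVerts_adj.2 ⟨trivial, a.2, trivial, b.2, induce_adj.1 hab⟩

lemma Walk.exists_reachable_induce_compl_of_adj_mem {s : Set V} {x u : V} (p : G.Walk x u)
    (hu : u ∈ s) (hx : x ∈ sᶜ) :
    ∃ (z : V) (hz : z ∈ sᶜ), (G.induce sᶜ).Reachable ⟨x, hx⟩ ⟨z, hz⟩ ∧ ∃ v ∈ s, G.Adj v z := by
  induction p with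
  | nil => exact absurd hu hx
  | @cons x b u h p ih =>
    by_cases hb : b ∈ s
    · exact ⟨x, hx, Reachable.refl _, b, hb, h.symm⟩
    · obtain ⟨z, hz, hbz, hzs⟩ := ih hu hb
      exact ⟨z, hz, (Adj.reachable (induce_adj.2 h)).trans hbz, hzs⟩

end SimpleGraph

lemma ball_eq_top_of_forall_exists_walk {G : SimpleGraph V} {v : V} {d : ℕ}
    (h : ∀ u, ∃ p : G.Walk v u, 2 * p.length + 1 ≤ d) : _root_.ball G v d = ⊤ := by
  refine eq_top_iff.2 ⟨fun u _ => ?_, fun x y hxy => ?_⟩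
  · obtain ⟨p, hp⟩ := h u
    exact ⟨p.append p.reverse, by simp only [Walk.length_append, Walk.length_reverse]; omega,
      by simp⟩
  · obtain ⟨p, hp⟩ := h x
    obtain ⟨q, hq⟩ := h y
    refine ⟨p.append (.cons hxy q.reverse), ?_, ?_⟩
    · rw [Walk.length_append, Walk.length_cons, Walk.length_reverse]
      omega
    · simp

lemma ball_eq_top_of_connected [Fintype V] {G : SimpleGraph V} (hG : G.Connected) (v : V)
    {d : ℕ} (hd : 2 * Fintype.card V ≤ d) : _root_.ball G v d = ⊤ := by
  classical
  refine ball_eq_top_of_forall_exists_walk fun u => ?_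
  obtain ⟨p⟩ := hG.preconnected v u
  have := p.toPath.2.length_lt
  exact ⟨p.toPath, by omega⟩

lemma connGraph_adj_iff_of_connected [Fintype V] {G : SimpleGraph V} (hG : G.Connected) {d : ℕ}
    (hd : 2 * Fintype.card V ≤ d) {v0 v1 x y : V} :
    (connGraph G d v0 v1).Adj x y ↔ x ≠ y ∧ x ∈ nbhd G v0 v1 ∧ y ∈ nbhd G v0 v1 ∧
      ((⊤ : G.Subgraph).deleteVerts {v0, v1}).spanningCoe.Reachable x y := by
  simp only [connGraph, ball_eq_top_of_connected hG _ hd, or_self]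

theorem stmt15_general [Fintype V] (G : SimpleGraph V) (hG : G.Connected)
    (v0 v1 : V) (d : ℕ)
    (hd : 2 * Fintype.card V ≤ d) :
    (¬ ((connGraph G d v0 v1).induce (nbhd G v0 v1)).Connected ↔
     ¬ (G.induce {x : V | x ≠ v0 ∧ x ≠ v1}).Connected) := by
  have hS : {x : V | x ≠ v0 ∧ x ≠ v1} = ({v0, v1} : Set V)ᶜ := by ext; simp
  have hN : nbhd G v0 v1 ⊆ ({v0, v1} : Set V)ᶜ := fun x hx => by simp [hx.1, hx.2.1]
  rw [not_iff_not, hS]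
  refine connected_iff_of_adj_iff_reachable (Set.inclusion hN) ?_ ?_
  · rintro ⟨x, hx⟩ ⟨y, hy⟩ hxy
    rw [induce_adj, connGraph_adj_iff_of_connected hG hd,
      reachable_spanningCoe_deleteVerts_top_iff (hN hx) (hN hy)]
    simp [hx, hy, Subtype.coe_ne_coe.2 hxy]
  · rintro ⟨x, hx⟩
    obtain ⟨p⟩ := hG.preconnected x v0
    obtain ⟨z, hz, hxz, v, hv, hvz⟩ := p.exists_reachable_induce_compl_of_adj_mem (by simp) hx
    obtain ⟨hz0, hz1⟩ : z ≠ v0 ∧ z ≠ v1 := by simpa [not_or] using hz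
    rcases hv with rfl | rfl
    exacts [⟨⟨z, hz0, hz1, .inl hvz⟩, hxz⟩, ⟨⟨z, hz0, hz1, .inr hvz⟩, hxz⟩]

/-- For a connected graph on n ≥ 3 vertices and d ≥ 2n, the connectivity graph
C_d(v₀,v₁,G) is disconnected iff G − v₀ − v₁ is disconnected; i.e. for such large d,
{v₀,v₁} is a d-local 2-separator precisely when it is a global 2-separator. -/
theorem stmt15 [Fintype V] (G : SimpleGraph V) (hG : G.Connected)
    (hn : 3 ≤ Fintype.card V) (v0 v1 : V) (hne : v0 ≠ v1) (d : ℕ)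
    (hd : 2 * Fintype.card V ≤ d) :
    (¬ ((connGraph G d v0 v1).induce (nbhd G v0 v1)).Connected ↔
     ¬ (G.induce {x : V | x ≠ v0 ∧ x ≠ v1}).Connected) :=
  stmt15_general G hG v0 v1 d hd
end
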